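/- arXiv:math/0608449 — 3 statements merged into one kernel-verified Lean document; each statement's English description precedes it below -/
import Mathlib

section
/- Let a, b ≥ 1 and let C, F ∈ ℝ[x,y] be homogeneous polynomials of degrees a and b respectively that are relatively prime (every common divisor is a unit). Then the degree-(a+b−2) homogeneous component of ℝ[x,y]/⟨C,F⟩ is one-dimensional over ℝ; in particular, there exist natural numbers u, v with u+v = a+b−2 such that the monomial x^u y^v does not belong to the ideal ⟨C,F⟩. -/
/-!
In degree `d = a + b - 2` the ideal `⟨C, F⟩` meets the homogeneous polynomials `V_d` in
`C • V_{d-a} ⊕ F • V_{d-b}`. It is a sum because the homogeneous components of a multiple of a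
homogeneous `G` are again multiples of `G`, and it is direct because a common element is divisible
by `C * F`, which is homogeneous of degree `a + b > d`. Its dimension is
`(d + 1 - a) + (d + 1 - b) = d`, one less than `dim V_d = d + 1`. Since `V_d` is spanned by the
monomials `x^u y^v`, one of them lies outside `⟨C, F⟩`.
-/

open MvPolynomial

theorem Submodule.finrank_quotient_comap_subtype {K M : Type*} [DivisionRing K] [AddCommGroup M]
    [Module K M] (p q : Submodule K M) [FiniteDimensional K p] :
    Module.finrank K (p ⧸ q.comap p.subtype) =
      Module.finrank K p - Module.finrank K (q ⊓ p : Submodule K M) := by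
  rw [inf_comm, ← map_comap_subtype, finrank_map_subtype_eq,
    ← finrank_quotient_add_finrank (q.comap p.subtype), Nat.add_sub_cancel]

namespace MvPolynomial

section CommRing

variable {σ R : Type*} [CommRing R] {G : MvPolynomial σ R} {g : ℕ}

attribute [local instance] gradedAlgebra in
theorem homogeneousComponent_mul_of_isHomogeneous_right (hG : G.IsHomogeneous g)
    (p : MvPolynomial σ R) (n : ℕ) :
    homogeneousComponent n (p * G) = if g ≤ n then homogeneousComponent (n - g) p * G else 0 := by
  simp only [← decomposition.decompose'_apply]
  exact DirectSum.coe_decompose_mul_of_right_mem (homogeneousSubmodule σ R) n (a := p) hG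

theorem homogeneousComponent_mem_span_singleton (hG : G.IsHomogeneous g)
    {f : MvPolynomial σ R} (hf : f ∈ Ideal.span {G}) (n : ℕ) :
    homogeneousComponent n f ∈ Ideal.span {G} := by
  obtain ⟨p, rfl⟩ := Ideal.mem_span_singleton'.mp hf
  rw [homogeneousComponent_mul_of_isHomogeneous_right hG]
  split_ifs
  · exact Ideal.mul_mem_left _ _ (Ideal.mem_span_singleton_self G)
  · exact zero_mem _

theorem span_singleton_inf_homogeneousSubmodule_add (hG : G.IsHomogeneous g) (n : ℕ) :
    (Ideal.span {G}).restrictScalars R ⊓ homogeneousSubmodule σ R (n + g) =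
      (homogeneousSubmodule σ R n).map (LinearMap.mulRight R G) := by
  ext f
  constructor
  · rintro ⟨hfG, hf⟩
    obtain ⟨p, rfl⟩ := Ideal.mem_span_singleton'.mp hfG
    refine ⟨homogeneousComponent n p, homogeneousComponent_mem n p, ?_⟩
    rw [LinearMap.mulRight_apply, ← homogeneousComponent_eq_self hf,
      homogeneousComponent_mul_of_isHomogeneous_right hG, if_pos (Nat.le_add_left g n),
      Nat.add_sub_cancel]
  · rintro ⟨p, hp, rfl⟩
    exact ⟨Ideal.mul_mem_left _ _ (Ideal.mem_span_singleton_self G), hp.mul hG⟩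

theorem span_singleton_inf_homogeneousSubmodule_of_lt (hG : G.IsHomogeneous g) {d : ℕ}
    (hd : d < g) : (Ideal.span {G}).restrictScalars R ⊓ homogeneousSubmodule σ R d = ⊥ := by
  refine eq_bot_iff.mpr fun f ⟨hfG, hf⟩ => ?_
  obtain ⟨p, rfl⟩ := Ideal.mem_span_singleton'.mp hfG
  rw [Submodule.mem_bot, ← homogeneousComponent_eq_self hf,
    homogeneousComponent_mul_of_isHomogeneous_right hG, if_neg (not_le.mpr hd)]

theorem span_pair_inf_homogeneousSubmodule {C F : MvPolynomial σ R} {a b : ℕ}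
    (hC : C.IsHomogeneous a) (hF : F.IsHomogeneous b) (d : ℕ) :
    (Ideal.span {C, F}).restrictScalars R ⊓ homogeneousSubmodule σ R d =
      (Ideal.span {C}).restrictScalars R ⊓ homogeneousSubmodule σ R d ⊔
        (Ideal.span {F}).restrictScalars R ⊓ homogeneousSubmodule σ R d := by
  refine le_antisymm ?_ (sup_le ?_ ?_)
  · rintro f ⟨hfI, hf⟩
    obtain ⟨u, v, rfl⟩ := Ideal.mem_span_pair.mp hfI
    rw [← homogeneousComponent_eq_self hf, map_add]
    exact Submodule.add_mem_sup
      ⟨homogeneousComponent_mem_span_singleton hC (Ideal.mul_mem_left _ _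
        (Ideal.mem_span_singleton_self C)) d, homogeneousComponent_mem d _⟩
      ⟨homogeneousComponent_mem_span_singleton hF (Ideal.mul_mem_left _ _
        (Ideal.mem_span_singleton_self F)) d, homogeneousComponent_mem d _⟩
  · exact inf_le_inf_right _ (Ideal.span_mono (by simp))
  · exact inf_le_inf_right _ (Ideal.span_mono (by simp))

theorem IsHomogeneous.not_isUnit [IsDomain R] {n : ℕ} (hG : G.IsHomogeneous n) (hn : n ≠ 0) :
    ¬IsUnit G := fun hu => hn <| by
  rw [← hG.totalDegree hu.ne_zero]
  exact (isUnit_iff_totalDegree_of_isReduced.mp hu).2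

theorem homogeneousSubmodule_le_iff_monomial_mem {I : Submodule R (MvPolynomial σ R)} {n : ℕ} :
    homogeneousSubmodule σ R n ≤ I ↔
      ∀ m : σ →₀ ℕ, m.degree = n → monomial m 1 ∈ I := by
  rw [homogeneousSubmodule_eq_finsupp_supported, ← restrictSupport, restrictSupport_eq_span,
    Submodule.span_le, Set.image_subset_iff]
  rfl

end CommRing

section Field

variable {σ K : Type*} [Field K]

theorem finrank_homogeneousSubmodule [Fintype σ] [DecidableEq σ] (n : ℕ) :
    Module.finrank K (homogeneousSubmodule σ K n) = (Fintype.card σ + n - 1).choose n := by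
  have hs : {m : σ →₀ ℕ | m.degree = n} =
      ((Finset.univ : Finset σ).finsuppAntidiag n : Set (σ →₀ ℕ)) := by
    ext m
    simp [Finset.mem_finsuppAntidiag, Finsupp.degree_eq_sum]
  rw [homogeneousSubmodule_eq_finsupp_supported, ← restrictSupport, hs,
    Module.finrank_eq_nat_card_basis (basisRestrictSupport K _), Nat.card_coe_set_eq,
    Set.ncard_coe_finset, Finset.card_finsuppAntidiag_nat_eq_choose, Finset.card_univ]

theorem finrank_span_singleton_inf_homogeneousSubmodule_add {G : MvPolynomial σ K} {g : ℕ}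
    (hG : G.IsHomogeneous g) (hG0 : G ≠ 0) (n : ℕ) :
    Module.finrank K ((Ideal.span {G}).restrictScalars K ⊓ homogeneousSubmodule σ K (n + g) :
      Submodule K (MvPolynomial σ K)) = Module.finrank K (homogeneousSubmodule σ K n) := by
  rw [span_singleton_inf_homogeneousSubmodule_add hG]
  exact (Submodule.equivMapOfInjective _ (mul_left_injective₀ hG0) _).finrank_eq.symm

theorem disjoint_span_singleton_inf_homogeneousSubmodule
    {C F : MvPolynomial σ K} {a b d : ℕ} (hC : C.IsHomogeneous a) (hF : F.IsHomogeneous b)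
    (hCF : IsRelPrime C F) (hd : d < a + b) :
    Disjoint ((Ideal.span {C}).restrictScalars K ⊓ homogeneousSubmodule σ K d)
      ((Ideal.span {F}).restrictScalars K ⊓ homogeneousSubmodule σ K d) := by
  refine disjoint_iff.mpr <| eq_bot_iff.mpr fun f ⟨⟨hfC, hf⟩, hfF, _⟩ => ?_
  have hfCF : f ∈ (Ideal.span {C * F}).restrictScalars K ⊓ homogeneousSubmodule σ K d :=
    ⟨Ideal.mem_span_singleton.mpr
      (hCF.mul_dvd (Ideal.mem_span_singleton.mp hfC) (Ideal.mem_span_singleton.mp hfF)), hf⟩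
  rwa [span_singleton_inf_homogeneousSubmodule_of_lt (hC.mul hF) hd] at hfCF

instance [Finite σ] (n : ℕ) : FiniteDimensional K (homogeneousSubmodule σ K n) :=
  Module.Finite.iff_fg.mpr (homogeneousSubmodule_fg σ K n)

theorem finrank_homogeneousSubmodule_fin_two (n : ℕ) :
    Module.finrank K (homogeneousSubmodule (Fin 2) K n) = n + 1 := by
  rw [finrank_homogeneousSubmodule, Fintype.card_fin, show 2 + n - 1 = n + 1 by omega,
    Nat.choose_succ_self_right]

theorem finrank_span_singleton_inf_homogeneousSubmodule_fin_two {G : MvPolynomial (Fin 2) K}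
    {g : ℕ} (hG : G.IsHomogeneous g) (hG0 : G ≠ 0) (d : ℕ) :
    Module.finrank K ((Ideal.span {G}).restrictScalars K ⊓ homogeneousSubmodule (Fin 2) K d :
      Submodule K (MvPolynomial (Fin 2) K)) = d + 1 - g := by
  -- the truncated subtraction `d + 1 - g` is `0` exactly in the case `d < g`
  rcases le_or_gt g d with hgd | hdg
  · obtain ⟨n, rfl⟩ := Nat.exists_eq_add_of_le' hgd
    rw [finrank_span_singleton_inf_homogeneousSubmodule_add hG hG0,
      finrank_homogeneousSubmodule_fin_two]
    omega
  · rw [span_singleton_inf_homogeneousSubmodule_of_lt hG hdg, finrank_bot]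
    omega

theorem finrank_span_pair_inf_homogeneousSubmodule_fin_two {C F : MvPolynomial (Fin 2) K}
    {a b d : ℕ} (hC : C.IsHomogeneous a) (hF : F.IsHomogeneous b) (hC0 : C ≠ 0) (hF0 : F ≠ 0)
    (hCF : IsRelPrime C F) (hd : d < a + b) :
    Module.finrank K ((Ideal.span {C, F}).restrictScalars K ⊓ homogeneousSubmodule (Fin 2) K d :
      Submodule K (MvPolynomial (Fin 2) K)) = (d + 1 - a) + (d + 1 - b) := by
  have := Submodule.finrank_sup_add_finrank_inf_eq
    ((Ideal.span {C}).restrictScalars K ⊓ homogeneousSubmodule (Fin 2) K d)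
    ((Ideal.span {F}).restrictScalars K ⊓ homogeneousSubmodule (Fin 2) K d)
  rwa [disjoint_iff.mp (disjoint_span_singleton_inf_homogeneousSubmodule hC hF hCF hd),
    finrank_bot, add_zero, finrank_span_singleton_inf_homogeneousSubmodule_fin_two hC hC0,
    finrank_span_singleton_inf_homogeneousSubmodule_fin_two hF hF0,
    ← span_pair_inf_homogeneousSubmodule hC hF] at this

theorem monomial_one_fin_two (m : Fin 2 →₀ ℕ) :
    monomial m (1 : K) = X 0 ^ m 0 * X 1 ^ m 1 := by
  rw [monomial_eq, C_1, one_mul, Finsupp.prod_fintype _ _ (fun _ => pow_zero _), Fin.prod_univ_two]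

end Field

end MvPolynomial

/-- If `C, F ∈ ℝ[x,y]` are relatively prime homogeneous polynomials of
degrees `a, b ≥ 1`, then the degree-`(a+b−2)` homogeneous component of `ℝ[x,y]/⟨C,F⟩`
is one-dimensional over `ℝ`; in particular there are `u, v` with `u + v = a + b − 2`
such that the monomial `x^u y^v` is not in the ideal `⟨C,F⟩`. -/
theorem socle_of_completeIntersection (a b : ℕ) (ha : 1 ≤ a) (hb : 1 ≤ b)
    (C F : MvPolynomial (Fin 2) ℝ)
    (hCa : C.IsHomogeneous a) (hFb : F.IsHomogeneous b)
    (hrel : IsRelPrime C F) :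
    Module.finrank ℝ
        (↥(homogeneousSubmodule (Fin 2) ℝ (a + b - 2)) ⧸
          Submodule.comap (homogeneousSubmodule (Fin 2) ℝ (a + b - 2)).subtype
            (Submodule.restrictScalars ℝ
              (Ideal.span {C, F} : Ideal (MvPolynomial (Fin 2) ℝ)))) = 1 ∧
      ∃ u v : ℕ, u + v = a + b - 2 ∧
        X 0 ^ u * X 1 ^ v ∉ (Ideal.span {C, F} : Ideal (MvPolynomial (Fin 2) ℝ)) := by
  set d := a + b - 2
  have hC0 : C ≠ 0 := fun h => hFb.not_isUnit (by omega) (isRelPrime_zero_left.mp (h ▸ hrel))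
  have hF0 : F ≠ 0 := fun h => hCa.not_isUnit (by omega) (isRelPrime_zero_right.mp (h ▸ hrel))
  have hV := finrank_homogeneousSubmodule_fin_two (K := ℝ) d
  have hI : Module.finrank ℝ ((Ideal.span {C, F}).restrictScalars ℝ ⊓
      homogeneousSubmodule (Fin 2) ℝ d : Submodule ℝ (MvPolynomial (Fin 2) ℝ)) = d := by
    rw [finrank_span_pair_inf_homogeneousSubmodule_fin_two hCa hFb hC0 hF0 hrel (by omega)]
    omega
  refine ⟨by rw [Submodule.finrank_quotient_comap_subtype, hI, hV]; omega, ?_⟩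
  have hVI : ¬homogeneousSubmodule (Fin 2) ℝ d ≤ (Ideal.span {C, F}).restrictScalars ℝ := by
    intro h
    rw [inf_eq_right.mpr h, hV] at hI
    omega
  obtain ⟨m, hm, hmI⟩ := not_forall₂.mp (mt homogeneousSubmodule_le_iff_monomial_mem.mpr hVI)
  refine ⟨m 0, m 1, by rwa [Finsupp.degree_eq_sum, Fin.sum_univ_two] at hm, ?_⟩
  rwa [← monomial_one_fin_two]
end

section
/- Let n ≥ 1 and set r = 2n. Let C, F ∈ ℝ[x,y] be homogeneous polynomials of degrees n and n+1 respectively, and suppose there exist A, B, D, E ∈ ℝ[x,y] such that B·F − E·C = x^{2n+1} and A·F − D·C = (x+y)^{2n+1}. Let C' = C(z,y) and F' = F(z,y) be obtained from C, F by substituting z for x. Then there exist natural numbers u, v with u+v = 2n−1 = r−1 such that the monomial x^u y^v does not belong to the ideal ⟨C, F, C', F'⟩ of ℝ[x,y,z]; in particular the degree-(r−1) homogeneous component of ℝ[x,y,z]/⟨C, F, C', F'⟩ is nonzero. -/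
/-! Substituting `x` for `z` retracts `ℝ[x,y,z]` onto `ℝ[x,y]` and maps `⟨C, F, C', F'⟩`
onto `⟨C, F⟩`, so it suffices to find a monomial of degree `2n - 1` outside `⟨C, F⟩ ⊆ ℝ[x,y]`.
The degree-`(2n - 1)` part of `⟨C, F⟩` is spanned by `C` times forms of degree `n - 1` and `F`
times forms of degree `n - 2`, so it has dimension at most `n + (n - 1) < 2n`, the number of
monomials of degree `2n - 1`. The count is done after dehomogenizing `y ↦ 1`, which sends forms
of degree `e` to polynomials of degree `< e + 1`. -/

open MvPolynomial

/-- The inclusion `ℝ[x,y] ⊆ ℝ[x,y,z]`, sending `x ↦ x`, `y ↦ y`. -/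
noncomputable def inclXY : MvPolynomial (Fin 2) ℝ →ₐ[ℝ] MvPolynomial (Fin 3) ℝ :=
  rename ![0, 1]

/-- The map `ℝ[x,y] → ℝ[x,y,z]` given by `p(x,y) ↦ p(z,y)`, i.e. sending
`x ↦ z`, `y ↦ y`. -/
noncomputable def substZforX : MvPolynomial (Fin 2) ℝ →ₐ[ℝ] MvPolynomial (Fin 3) ℝ :=
  rename ![2, 1]

section HomogeneousComponent

variable {σ R : Type*} [CommSemiring R]

attribute [local instance] MvPolynomial.gradedAlgebra

theorem MvPolynomial.IsHomogeneous.homogeneousComponent_mul_right {G : MvPolynomial σ R} {m : ℕ}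
    (hG : G.IsHomogeneous m) (p : MvPolynomial σ R) (d : ℕ) :
    homogeneousComponent d (p * G) = if m ≤ d then homogeneousComponent (d - m) p * G else 0 := by
  have := DirectSum.coe_decompose_mul_of_right_mem (homogeneousSubmodule σ R) (a := p) d
    ((mem_homogeneousSubmodule m G).2 hG)
  simpa only [DirectSum.decompose, Equiv.coe_fn_mk, decomposition.decompose'_apply] using this

theorem MvPolynomial.isHomogeneous_X_pow_mul_X_pow (i j : σ) (u v : ℕ) :
    (X i ^ u * X j ^ v : MvPolynomial σ R).IsHomogeneous (u + v) := by
  simpa using ((isHomogeneous_X R i).pow u).mul ((isHomogeneous_X R j).pow v)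

end HomogeneousComponent

section Dehomogenize

variable {R : Type*} [CommSemiring R]

noncomputable def dehomogenize : MvPolynomial (Fin 2) R →ₐ[R] Polynomial R :=
  aeval ![Polynomial.X, 1]

theorem dehomogenize_X_pow_mul_X_pow (u v : ℕ) :
    dehomogenize (X 0 ^ u * X 1 ^ v : MvPolynomial (Fin 2) R) = Polynomial.X ^ u := by
  simp [dehomogenize]

theorem MvPolynomial.IsHomogeneous.dehomogenize_mem_degreeLT {p : MvPolynomial (Fin 2) R} {e : ℕ}
    (hp : p.IsHomogeneous e) : dehomogenize p ∈ Polynomial.degreeLT R (e + 1) := by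
  rw [p.as_sum, map_sum]
  refine Submodule.sum_mem _ fun a ha => ?_
  have ha0 : a 0 ≤ e := by
    have := Finsupp.le_degree 0 a
    rw [Finsupp.degree_eq_weight_one] at this
    exact this.trans_eq (hp (mem_support_iff.mp ha))
  have hmono : dehomogenize (monomial a (coeff a p)) =
      Polynomial.C (coeff a p) * Polynomial.X ^ a 0 := by
    simp [dehomogenize, aeval_monomial, Polynomial.C_eq_algebraMap]
  rw [hmono, Polynomial.mem_degreeLT]
  exact (Polynomial.degree_C_mul_X_pow_le _ _).trans_lt (by exact_mod_cast Nat.lt_succ_of_le ha0)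

theorem dehomogenize_homogeneousComponent_mul_mem {G : MvPolynomial (Fin 2) R} {m : ℕ}
    (hG : G.IsHomogeneous m) (p : MvPolynomial (Fin 2) R) (d : ℕ) :
    dehomogenize (homogeneousComponent d (p * G)) ∈
      (Polynomial.degreeLT R (d + 1 - m)).map (LinearMap.mulRight R (dehomogenize G)) := by
  rw [hG.homogeneousComponent_mul_right]
  split_ifs with hmd
  · refine ⟨_, Polynomial.degreeLT_mono (by omega)
      (homogeneousComponent_isHomogeneous (d - m) p).dehomogenize_mem_degreeLT, ?_⟩
    simp
  · simp

theorem dehomogenize_homogeneousComponent_mem_of_mem_span_pair {C F : MvPolynomial (Fin 2) R}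
    {i j d : ℕ} (hC : C.IsHomogeneous i) (hF : F.IsHomogeneous j) {g : MvPolynomial (Fin 2) R}
    (hg : g ∈ Ideal.span {C, F}) :
    dehomogenize (homogeneousComponent d g) ∈
      (Polynomial.degreeLT R (d + 1 - i)).map (LinearMap.mulRight R (dehomogenize C)) ⊔
        (Polynomial.degreeLT R (d + 1 - j)).map (LinearMap.mulRight R (dehomogenize F)) := by
  obtain ⟨a, b, rfl⟩ := Ideal.mem_span_pair.1 hg
  rw [map_add, map_add]
  exact Submodule.add_mem_sup (dehomogenize_homogeneousComponent_mul_mem hC a d)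
    (dehomogenize_homogeneousComponent_mul_mem hF b d)

end Dehomogenize

section Field

variable {K : Type*} [Field K]

theorem Polynomial.exists_X_pow_notMem_sup_map_mulRight (c f : Polynomial K) {k l N : ℕ}
    (h : k + l < N) :
    ∃ u < N, Polynomial.X ^ u ∉ (Polynomial.degreeLT K k).map (LinearMap.mulRight K c) ⊔
      (Polynomial.degreeLT K l).map (LinearMap.mulRight K f) := by
  classical
  by_contra! hall
  set S := (Polynomial.degreeLT K k).map (LinearMap.mulRight K c) ⊔
    (Polynomial.degreeLT K l).map (LinearMap.mulRight K f)
  have hle : Polynomial.degreeLT K N ≤ S := by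
    rw [Polynomial.degreeLT_eq_span_X_pow, Submodule.span_le]
    intro _ hp
    obtain ⟨u, hu, rfl⟩ := Finset.mem_image.1 (Finset.mem_coe.1 hp)
    exact hall u (Finset.mem_range.1 hu)
  have finrank_degreeLT (m : ℕ) : Module.finrank K (Polynomial.degreeLT K m) = m := by
    simp [(Polynomial.degreeLTEquiv K m).finrank_eq]
  have (m : ℕ) : FiniteDimensional K (Polynomial.degreeLT K m) :=
    .equiv (Polynomial.degreeLTEquiv K m).symm
  have : N ≤ k + l := calc
    N = Module.finrank K (Polynomial.degreeLT K N) := (finrank_degreeLT N).symm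
    _ ≤ Module.finrank K S := Submodule.finrank_mono hle
    _ ≤ Module.finrank K ((Polynomial.degreeLT K k).map (LinearMap.mulRight K c)) +
        Module.finrank K ((Polynomial.degreeLT K l).map (LinearMap.mulRight K f)) :=
      Submodule.finrank_add_le_finrank_add_finrank _ _
    _ ≤ k + l := by
      grw [Submodule.finrank_map_le, Submodule.finrank_map_le, finrank_degreeLT, finrank_degreeLT]
  omega

theorem exists_X_pow_mul_X_pow_notMem_span_pair {C F : MvPolynomial (Fin 2) K} {i j d : ℕ}
    (hC : C.IsHomogeneous i) (hF : F.IsHomogeneous j)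
    (h : (d + 1 - i) + (d + 1 - j) < d + 1) :
    ∃ u v : ℕ, u + v = d ∧ (X 0 ^ u * X 1 ^ v : MvPolynomial (Fin 2) K) ∉ Ideal.span {C, F} := by
  obtain ⟨u, hu, hnot⟩ :=
    Polynomial.exists_X_pow_notMem_sup_map_mulRight (dehomogenize C) (dehomogenize F) h
  refine ⟨u, d - u, by omega, fun hmem => hnot ?_⟩
  have hdeg : (X 0 ^ u * X 1 ^ (d - u) : MvPolynomial (Fin 2) K).IsHomogeneous d := by
    simpa [Nat.add_sub_cancel' (Nat.lt_succ_iff.1 hu)] using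
      isHomogeneous_X_pow_mul_X_pow 0 1 u (d - u)
  simpa [homogeneousComponent_of_mem ((mem_homogeneousSubmodule d _).2 hdeg),
    dehomogenize_X_pow_mul_X_pow] using
    dehomogenize_homogeneousComponent_mem_of_mem_span_pair (d := d) hC hF hmem

end Field

noncomputable def collapseZ : MvPolynomial (Fin 3) ℝ →ₐ[ℝ] MvPolynomial (Fin 2) ℝ :=
  rename ![0, 1, 0]

theorem collapseZ_comp_inclXY : collapseZ.comp inclXY = AlgHom.id ℝ _ := by
  ext i; fin_cases i <;> simp [collapseZ, inclXY]

theorem collapseZ_comp_substZforX : collapseZ.comp substZforX = AlgHom.id ℝ _ := by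
  ext i; fin_cases i <;> simp [collapseZ, substZforX]

theorem map_collapseZ_span_inclXY_substZforX (C F : MvPolynomial (Fin 2) ℝ) :
    Ideal.map collapseZ (Ideal.span {inclXY C, inclXY F, substZforX C, substZforX F}) =
      Ideal.span {C, F} := by
  have hι (p) : collapseZ (inclXY p) = p := AlgHom.congr_fun collapseZ_comp_inclXY p
  have hσ (p) : collapseZ (substZforX p) = p := AlgHom.congr_fun collapseZ_comp_substZforX p
  simp [Ideal.map_span, Set.image_insert_eq, hι, hσ]

theorem monomial_not_mem_odd_case_general (n r : ℕ) (hn : 1 ≤ n) (hr : r = 2 * n)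
    (C F : MvPolynomial (Fin 2) ℝ)
    (hCh : C.IsHomogeneous n) (hFh : F.IsHomogeneous (n + 1)) :
    (∃ u v : ℕ, u + v = 2 * n - 1 ∧
        (X 0 ^ u * X 1 ^ v : MvPolynomial (Fin 3) ℝ) ∉
          (Ideal.span {inclXY C, inclXY F, substZforX C, substZforX F} :
            Ideal (MvPolynomial (Fin 3) ℝ))) ∧
      Nontrivial
        (↥(homogeneousSubmodule (Fin 3) ℝ (r - 1)) ⧸
          Submodule.comap (homogeneousSubmodule (Fin 3) ℝ (r - 1)).subtype
            (Submodule.restrictScalars ℝ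
              (Ideal.span {inclXY C, inclXY F, substZforX C, substZforX F} :
                Ideal (MvPolynomial (Fin 3) ℝ)))) := by
  obtain ⟨u, v, huv, hnot⟩ :=
    exists_X_pow_mul_X_pow_notMem_span_pair (d := 2 * n - 1) hCh hFh (by omega)
  have hnot3 : (X 0 ^ u * X 1 ^ v : MvPolynomial (Fin 3) ℝ) ∉
      Ideal.span {inclXY C, inclXY F, substZforX C, substZforX F} := fun hmem => hnot <| by
    simpa [← map_collapseZ_span_inclXY_substZforX, collapseZ] using
      Ideal.mem_map_of_mem collapseZ hmem
  have hdeg : (X 0 ^ u * X 1 ^ v : MvPolynomial (Fin 3) ℝ) ∈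
      homogeneousSubmodule (Fin 3) ℝ (r - 1) :=
    (mem_homogeneousSubmodule _ _).2 <| by
      simpa [hr, huv] using isHomogeneous_X_pow_mul_X_pow 0 1 u v
  exact ⟨⟨u, v, huv, hnot3⟩, Submodule.Quotient.nontrivial_iff.2 fun htop =>
    hnot3 (Submodule.eq_top_iff'.1 htop ⟨_, hdeg⟩)⟩

/-- odd case `r + 1 = 2n + 1`.  Let `n ≥ 1`, `r = 2n`, and let
`C, F ∈ ℝ[x,y]` be homogeneous of degrees `n` and `n+1` with `B·F − E·C = x^(2n+1)`
and `A·F − D·C = (x+y)^(2n+1)` for some `A, B, D, E`.  With `C' = C(z,y)`,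
`F' = F(z,y)`, there are `u, v` with `u + v = 2n − 1 = r − 1` such that
`x^u y^v ∉ ⟨C, F, C', F'⟩` in `ℝ[x,y,z]`; in particular the degree-`(r−1)`
homogeneous component of `ℝ[x,y,z]/⟨C, F, C', F'⟩` is nonzero. -/
theorem monomial_not_mem_odd_case (n r : ℕ) (hn : 1 ≤ n) (hr : r = 2 * n)
    (C F : MvPolynomial (Fin 2) ℝ)
    (hCh : C.IsHomogeneous n) (hFh : F.IsHomogeneous (n + 1))
    (A B D E : MvPolynomial (Fin 2) ℝ)
    (h1 : B * F - E * C = X 0 ^ (2 * n + 1))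
    (h2 : A * F - D * C = (X 0 + X 1) ^ (2 * n + 1)) :
    (∃ u v : ℕ, u + v = 2 * n - 1 ∧
        (X 0 ^ u * X 1 ^ v : MvPolynomial (Fin 3) ℝ) ∉
          (Ideal.span {inclXY C, inclXY F, substZforX C, substZforX F} :
            Ideal (MvPolynomial (Fin 3) ℝ))) ∧
      Nontrivial
        (↥(homogeneousSubmodule (Fin 3) ℝ (r - 1)) ⧸
          Submodule.comap (homogeneousSubmodule (Fin 3) ℝ (r - 1)).subtype
            (Submodule.restrictScalars ℝ
              (Ideal.span {inclXY C, inclXY F, substZforX C, substZforX F} :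
                Ideal (MvPolynomial (Fin 3) ℝ)))) :=
  monomial_not_mem_odd_case_general n r hn hr C F hCh hFh
end

section
/- Let n ≥ 1. There exists a triple (A, B, C) of homogeneous polynomials of degree n in ℝ[x,y], not all zero, satisfying A·x^{2n+1} + B·(x+y)^{2n+1} + C·y^{2n+1} = 0; and the space of triples (D, E, F) of homogeneous polynomials of degree n+1 satisfying D·x^{2n+1} + E·(x+y)^{2n+1} + F·y^{2n+1} = 0 has dimension at least 2. -/
open MvPolynomial

/-- The `ℝ`-linear map sending a triple `(A, B, C)` of polynomials to
`A·g₁ + B·g₂ + C·g₃`; its kernel is the syzygy module of `(g₁, g₂, g₃)`. -/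
noncomputable def syzMap (g₁ g₂ g₃ : MvPolynomial (Fin 2) ℝ) :
    (MvPolynomial (Fin 2) ℝ × MvPolynomial (Fin 2) ℝ × MvPolynomial (Fin 2) ℝ) →ₗ[ℝ]
      MvPolynomial (Fin 2) ℝ where
  toFun p := p.1 * g₁ + p.2.1 * g₂ + p.2.2 * g₃
  map_add' p q := by
    simp only [Prod.fst_add, Prod.snd_add]
    ring
  map_smul' c p := by
    simp only [Prod.smul_fst, Prod.smul_snd, MvPolynomial.smul_eq_C_mul, RingHom.id_apply]
    ring

open Module

/-! The forms of degree `k` in two variables form a space of dimension `k + 1`. Multiplying a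
triple of forms of degree `k` against three forms of degree `m` lands in the forms of degree
`k + m`, so by rank–nullity the syzygies of degree `k` have dimension at least
`3 (k + 1) - (k + m + 1) = 2k + 2 - m`. For `m = 2n + 1` this is `1` in degree `n` and `3` in
degree `n + 1`. -/

def Submodule.prodEquiv {R M N : Type*} [Semiring R] [AddCommMonoid M] [AddCommMonoid N]
    [Module R M] [Module R N] (p : Submodule R M) (q : Submodule R N) :
    p.prod q ≃ₗ[R] p × q where
  toFun x := (⟨x.1.1, x.2.1⟩, ⟨x.1.2, x.2.2⟩)
  invFun x := ⟨(x.1, x.2), x.1.2, x.2.2⟩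
  map_add' _ _ := rfl
  map_smul' _ _ := rfl
  left_inv _ := rfl
  right_inv _ := rfl

section Prod
variable {K V W : Type*} [DivisionRing K] [AddCommGroup V] [Module K V] [AddCommGroup W]
  [Module K W] (p : Submodule K V) (q : Submodule K W) [FiniteDimensional K p]
  [FiniteDimensional K q]

instance Submodule.finiteDimensional_prod : FiniteDimensional K (p.prod q) :=
  Module.Finite.equiv (p.prodEquiv q).symm

theorem Submodule.finrank_prod : finrank K (p.prod q) = finrank K p + finrank K q := by
  rw [(p.prodEquiv q).finrank_eq, Module.finrank_prod]

theorem Submodule.finrank_le_finrank_add_finrank_inf_ker (S : Submodule K V)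
    [FiniteDimensional K S] {T : Submodule K W} [FiniteDimensional K T] {f : V →ₗ[K] W}
    (h : S.map f ≤ T) : finrank K S ≤ finrank K T + finrank K ↥(S ⊓ LinearMap.ker f) := by
  have hrn := (f.domRestrict S).finrank_range_add_finrank_ker
  rw [LinearMap.range_domRestrict, LinearMap.ker_domRestrict,
    ← Submodule.finrank_map_subtype_eq, Submodule.map_comap_subtype] at hrn
  have := Submodule.finrank_mono h
  omega

end Prod

theorem Finsupp.natCard_degree_eq_fin_two (k : ℕ) :
    Nat.card {d : Fin 2 →₀ ℕ // d.degree = k} = k + 1 := by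
  let e : (Fin 2 →₀ ℕ) ≃ ℕ × ℕ := Finsupp.equivFunOnFinite.trans (finTwoArrowEquiv ℕ)
  rw [← Finset.Nat.card_antidiagonal k, ← Nat.card_eq_finsetCard]
  refine Nat.card_congr (e.subtypeEquiv fun d => ?_)
  simp [e, Finsupp.degree_eq_sum, Fin.sum_univ_two]

theorem MvPolynomial.finrank_homogeneousSubmodule_fin_two_s9 (R : Type*) [CommRing R]
    [Nontrivial R] (k : ℕ) : finrank R (homogeneousSubmodule (Fin 2) R k) = k + 1 := by
  rw [homogeneousSubmodule_eq_finsupp_supported, ← restrictSupport,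
    finrank_eq_nat_card_basis (basisRestrictSupport R {d | d.degree = k})]
  exact Finsupp.natCard_degree_eq_fin_two k

instance MvPolynomial.finite_homogeneousSubmodule (σ R : Type*) [CommSemiring R] [Finite σ]
    (k : ℕ) :
    Module.Finite R (homogeneousSubmodule σ R k) :=
  Module.Finite.iff_fg.mpr (homogeneousSubmodule_fg σ R k)

noncomputable abbrev MvPolynomial.homogeneousTriples (σ R : Type*) [CommSemiring R] (k : ℕ) :
    Submodule R (MvPolynomial σ R × MvPolynomial σ R × MvPolynomial σ R) :=
  (homogeneousSubmodule σ R k).prod ((homogeneousSubmodule σ R k).prod (homogeneousSubmodule σ R k))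

theorem MvPolynomial.finrank_homogeneousTriples_fin_two (K : Type*) [Field K] (k : ℕ) :
    finrank K (homogeneousTriples (Fin 2) K k) = 3 * (k + 1) := by
  simp only [Submodule.finrank_prod, finrank_homogeneousSubmodule_fin_two_s9]
  ring

section Syzygy
variable {g₁ g₂ g₃ : MvPolynomial (Fin 2) ℝ} {m : ℕ}

theorem syzMap_map_homogeneousTriples_le (h₁ : g₁.IsHomogeneous m) (h₂ : g₂.IsHomogeneous m)
    (h₃ : g₃.IsHomogeneous m) (k : ℕ) :
    (homogeneousTriples (Fin 2) ℝ k).map (syzMap g₁ g₂ g₃) ≤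
      homogeneousSubmodule (Fin 2) ℝ (k + m) := by
  rintro _ ⟨⟨A, B, C⟩, ⟨hA, hB, hC⟩, rfl⟩
  exact add_mem (add_mem (hA.mul h₁ :) (hB.mul h₂ :)) (hC.mul h₃ :)

theorem le_finrank_homogeneousTriples_inf_ker_syzMap (h₁ : g₁.IsHomogeneous m)
    (h₂ : g₂.IsHomogeneous m) (h₃ : g₃.IsHomogeneous m) (k : ℕ) :
    2 * k + 2 ≤
      m + finrank ℝ ↥(homogeneousTriples (Fin 2) ℝ k ⊓ LinearMap.ker (syzMap g₁ g₂ g₃)) := by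
  have := Submodule.finrank_le_finrank_add_finrank_inf_ker _
    (syzMap_map_homogeneousTriples_le h₁ h₂ h₃ k)
  rw [finrank_homogeneousTriples_fin_two, finrank_homogeneousSubmodule_fin_two_s9] at this
  omega

end Syzygy

theorem syzygy_space_odd_general (n : ℕ) :
    (∃ A B C : MvPolynomial (Fin 2) ℝ,
        (A, B, C) ≠ (0, 0, 0) ∧
        A.IsHomogeneous n ∧ B.IsHomogeneous n ∧ C.IsHomogeneous n ∧
        A * X 0 ^ (2 * n + 1) + B * (X 0 + X 1) ^ (2 * n + 1) +
          C * X 1 ^ (2 * n + 1) = 0) ∧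
      2 ≤ Module.rank ℝ
        ↥(((homogeneousSubmodule (Fin 2) ℝ (n + 1)).prod
              ((homogeneousSubmodule (Fin 2) ℝ (n + 1)).prod
                (homogeneousSubmodule (Fin 2) ℝ (n + 1)))) ⊓
            LinearMap.ker
              (syzMap (X 0 ^ (2 * n + 1)) ((X 0 + X 1) ^ (2 * n + 1))
                (X 1 ^ (2 * n + 1)))) := by
  have hX (i : Fin 2) : (X i : MvPolynomial (Fin 2) ℝ).IsHomogeneous 1 := isHomogeneous_X ℝ i
  have bound := le_finrank_homogeneousTriples_inf_ker_syzMap (m := 2 * n + 1)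
    (by simpa using (hX 0).pow (2 * n + 1)) (by simpa using ((hX 0).add (hX 1)).pow (2 * n + 1))
    (by simpa using (hX 1).pow (2 * n + 1))
  constructor
  · have hpos := Nat.lt_add_right_iff_pos.mp ((bound n).trans_lt' (Nat.lt_succ_self _))
    obtain ⟨⟨⟨A, B, C⟩, ⟨hA, hB, hC⟩, hsyz⟩, hne⟩ := finrank_pos_iff_exists_ne_zero.mp hpos
    exact ⟨A, B, C, fun h => hne (Subtype.ext h), hA, hB, hC, hsyz⟩
  · have h3 := bound (n + 1)
    dsimp only [homogeneousTriples] at h3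
    rw [← finrank_eq_rank]
    exact_mod_cast (by omega : 2 ≤ _)

/-- For `n ≥ 1` there is a nonzero triple `(A, B, C)` of homogeneous
polynomials of degree `n` in `ℝ[x,y]` with
`A·x^(2n+1) + B·(x+y)^(2n+1) + C·y^(2n+1) = 0`, and the space of triples `(D, E, F)`
of homogeneous polynomials of degree `n+1` with
`D·x^(2n+1) + E·(x+y)^(2n+1) + F·y^(2n+1) = 0` has dimension at least `2`. -/
theorem syzygy_space_odd (n : ℕ) (hn : 1 ≤ n) :
    (∃ A B C : MvPolynomial (Fin 2) ℝ,
        (A, B, C) ≠ (0, 0, 0) ∧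
        A.IsHomogeneous n ∧ B.IsHomogeneous n ∧ C.IsHomogeneous n ∧
        A * X 0 ^ (2 * n + 1) + B * (X 0 + X 1) ^ (2 * n + 1) +
          C * X 1 ^ (2 * n + 1) = 0) ∧
      2 ≤ Module.rank ℝ
        ↥(((homogeneousSubmodule (Fin 2) ℝ (n + 1)).prod
              ((homogeneousSubmodule (Fin 2) ℝ (n + 1)).prod
                (homogeneousSubmodule (Fin 2) ℝ (n + 1)))) ⊓
            LinearMap.ker
              (syzMap (X 0 ^ (2 * n + 1)) ((X 0 + X 1) ^ (2 * n + 1))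
                (X 1 ^ (2 * n + 1)))) :=
  syzygy_space_odd_general n
end
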